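/- arXiv:2504.03910 — 7 statements merged into one kernel-verified Lean document; each statement's English description precedes it below -/
import Mathlib

section
/- If F is a pliable set family on ground set V, S ∈ F, C is an inclusion-minimal member of F, and C ∩ S ≠ ∅ and C ⊄ S, then C and S cross, S \ C ∈ F, S ∪ C ∈ F, C ∩ S ∉ F, and C \ S ∉ F. -/
variable {V : Type*}

/-- Two sets `A`, `B` cross if `A ∩ B`, `univ \ (A ∪ B)`, `A \ B`, `B \ A` are all nonempty. -/
def Crosses (A B : Set V) : Prop :=
  (A ∩ B).Nonempty ∧ (Set.univ \ (A ∪ B)).Nonempty ∧ (A \ B).Nonempty ∧ (B \ A).Nonempty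

/-- At least two of the four propositions hold. -/
def AtLeastTwo (p q r s : Prop) : Prop :=
  (p ∧ q) ∨ (p ∧ r) ∨ (p ∧ s) ∨ (q ∧ r) ∨ (q ∧ s) ∨ (r ∧ s)

/-- A set family on `V` is pliable. -/
def Pliable (F : Set (Set V)) : Prop :=
  ∅ ∉ F ∧ Set.univ ∉ F ∧
    ∀ A ∈ F, ∀ B ∈ F, AtLeastTwo (A ∩ B ∈ F) (A ∪ B ∈ F) (A \ B ∈ F) (B \ A ∈ F)

/-- An `F`-core: an inclusion-minimal member of `F`. -/
def IsCore (F : Set (Set V)) (C : Set V) : Prop :=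
  C ∈ F ∧ ∀ A ∈ F, A ⊆ C → A = C

theorem stmt0 [Fintype V] (F : Set (Set V)) (hF : Pliable F)
    (S C : Set V) (hS : S ∈ F) (hC : IsCore F C)
    (hint : (C ∩ S).Nonempty) (hns : ¬ C ⊆ S) :
    Crosses C S ∧ S \ C ∈ F ∧ S ∪ C ∈ F ∧ C ∩ S ∉ F ∧ C \ S ∉ F := by

  obtain ⟨hCF, hmin⟩ := hC
  obtain ⟨hne, hnuniv, hpl⟩ := hF
  obtain ⟨x, hxC, hxS⟩ := Set.not_subset.mp hns
  have hCS : C \ S ≠ ∅ := fun h => (Set.eq_empty_iff_forall_notMem.mp h x) ⟨hxC, hxS⟩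
  have hint_ne : C ∩ S ∉ F := by
    intro h
    have := hmin _ h Set.inter_subset_left
    exact hxS ((this.symm ▸ hxC : x ∈ C ∩ S)).2
  have hdiff_ne : C \ S ∉ F := by
    intro h
    have heq := hmin _ h Set.diff_subset
    obtain ⟨y, hyC, hyS⟩ := hint
    exact ((heq.symm ▸ hyC : y ∈ C \ S)).2 hyS
  have h2 := hpl C hCF S hS
  have hu : C ∪ S ∈ F ∧ S \ C ∈ F := by
    rcases h2 with ⟨h,_⟩|⟨h,_⟩|⟨h,_⟩|⟨h1,h2⟩|⟨h1,h2⟩|⟨h1,_⟩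
    · exact absurd h hint_ne
    · exact absurd h hint_ne
    · exact absurd h hint_ne
    · exact absurd h2 hdiff_ne
    · exact ⟨h1, h2⟩
    · exact absurd h1 hdiff_ne
  have hSC : (S \ C).Nonempty := by
    rcases Set.eq_empty_or_nonempty (S \ C) with h | h
    · exact absurd (h ▸ hu.2) hne
    · exact h
  have huniv : (Set.univ \ (C ∪ S)).Nonempty := by
    rcases Set.eq_empty_or_nonempty (Set.univ \ (C ∪ S)) with h | h
    · have : C ∪ S = Set.univ := by
        apply Set.eq_univ_of_forall
        intro z
        by_contra hz
        exact Set.eq_empty_iff_forall_notMem.mp h z ⟨trivial, hz⟩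
      exact absurd (this ▸ hu.1) hnuniv
    · exact h
  refine ⟨⟨hint, huniv, ⟨x, hxC, hxS⟩, hSC⟩, hu.2, ?_, hint_ne, hdiff_ne⟩
  rw [Set.union_comm]
  exact hu.1
end

section
/- If F is a pliable set family, then any two distinct inclusion-minimal members (cores) of F are disjoint. -/
variable {V : Type*}

theorem stmt1 [Fintype V] (F : Set (Set V)) (hF : Pliable F)
    (C₁ C₂ : Set V) (h₁ : IsCore F C₁) (h₂ : IsCore F C₂) (hne : C₁ ≠ C₂) :
    Disjoint C₁ C₂ := by
  have hcap : C₁ ∩ C₂ ∈ F → False := by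
    intro h
    have e1 : C₁ ∩ C₂ = C₁ := h₁.2 _ h Set.inter_subset_left
    have hsub : C₁ ⊆ C₂ := by rw [← e1]; exact Set.inter_subset_right
    exact hne (h₂.2 _ h₁.1 hsub)
  have hd1 : C₁ \ C₂ ∈ F → Disjoint C₁ C₂ := by
    intro h
    have e : C₁ \ C₂ = C₁ := h₁.2 _ h Set.diff_subset
    rw [Set.disjoint_left]
    intro x hx
    rw [← e] at hx
    exact hx.2
  have hd2 : C₂ \ C₁ ∈ F → Disjoint C₁ C₂ := by
    intro h
    have e : C₂ \ C₁ = C₂ := h₂.2 _ h Set.diff_subset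
    rw [Set.disjoint_right]
    intro x hx
    rw [← e] at hx
    exact hx.2
  rcases hF.2.2 C₁ h₁.1 C₂ h₂.1 with ⟨h, _⟩ | ⟨h, _⟩ | ⟨h, _⟩ | ⟨_, h⟩ | ⟨_, h⟩ | ⟨h, _⟩
  · exact (hcap h).elim
  · exact (hcap h).elim
  · exact (hcap h).elim
  · exact hd1 h
  · exact hd2 h
  · exact hd1 h
end

section
/- If F is a pliable set family on V and J is any set of edges (unordered pairs) on V, then the residual family F^J = {S ∈ F : no edge of J has exactly one endpoint in S} is also pliable. -/
variable {V : Type*}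

/-- An edge `e = (u,v)` covers `S` if exactly one of its endpoints lies in `S`. -/
def Covers (e : V × V) (S : Set V) : Prop :=
  (e.1 ∈ S ∧ e.2 ∉ S) ∨ (e.2 ∈ S ∧ e.1 ∉ S)

/-- The residual family of `F` with respect to an edge set `J`. -/
def Residual (F : Set (Set V)) (J : Set (V × V)) : Set (Set V) :=
  {S ∈ F | ∀ e ∈ J, ¬ Covers e S}


lemma not_covers_ops (e : V × V) (A B : Set V) (hA : ¬ Covers e A) (hB : ¬ Covers e B) :
    ¬ Covers e (A ∩ B) ∧ ¬ Covers e (A ∪ B) ∧ ¬ Covers e (A \ B) ∧ ¬ Covers e (B \ A) := by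
  simp only [Covers, Set.mem_inter_iff, Set.mem_union, Set.mem_diff] at *
  tauto

theorem stmt2 [Fintype V] (F : Set (Set V)) (hF : Pliable F)
    (J : Set (V × V)) (hJ : ∀ e ∈ J, e.1 ≠ e.2) :
    Pliable (Residual F J) := by
  obtain ⟨h0, hu, hp⟩ := hF
  refine ⟨fun h => h0 h.1, fun h => hu h.1, ?_⟩
  rintro A ⟨hAF, hAJ⟩ B ⟨hBF, hBJ⟩
  have key : ∀ e ∈ J, ¬ Covers e (A ∩ B) ∧ ¬ Covers e (A ∪ B) ∧
      ¬ Covers e (A \ B) ∧ ¬ Covers e (B \ A) :=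
    fun e he => not_covers_ops e A B (hAJ e he) (hBJ e he)
  have h1 : ∀ e ∈ J, ¬ Covers e (A ∩ B) := fun e he => (key e he).1
  have h2 : ∀ e ∈ J, ¬ Covers e (A ∪ B) := fun e he => (key e he).2.1
  have h3 : ∀ e ∈ J, ¬ Covers e (A \ B) := fun e he => (key e he).2.2.1
  have h4 : ∀ e ∈ J, ¬ Covers e (B \ A) := fun e he => (key e he).2.2.2
  have := hp A hAF B hBF
  unfold AtLeastTwo at this ⊢
  unfold Residual
  simp only [Set.mem_setOf_eq]
  tauto
end

section
/- Let T be a finite rooted tree in which every node is colored black or white, such that every leaf is black and every non-root node with exactly one child is black. Then the number of white nodes is at most the number of black nodes; moreover if the root is black or has at least two children, the number of white nodes is at most the number of black nodes minus one. -/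
open Finset

/-- A finite rooted tree given by a parent function: the root is a fixed point of `parent`
and every node reaches the root by iterating `parent`. -/
structure ParentTree (α : Type*) where
  root : α
  parent : α → α
  root_fix : parent root = root
  reach : ∀ v, ∃ n, parent^[n] v = root

variable {α : Type*} [Fintype α] [DecidableEq α]

/-- The children of a node `v`. -/
def children (T : ParentTree α) (v : α) : Finset α :=
  Finset.univ.filter (fun u => u ≠ T.root ∧ T.parent u = v)

/-- `u` is a (weak) descendant of `v`. -/
def IsDesc (T : ParentTree α) (u v : α) : Prop :=
  ∃ n, T.parent^[n] u = v

/-- The edges of the tree are identified with the non-root nodes (each non-root node `v`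
corresponds to the edge `{v, parent v}`, of which `v` is the lower endpoint). -/
def edgeNodes (T : ParentTree α) : Finset α :=
  Finset.univ.filter (fun v => v ≠ T.root)

/-- The set of black nodes, given a coloring `black : α → Bool`. -/
def blackNodes (T : ParentTree α) (black : α → Bool) : Finset α :=
  Finset.univ.filter (fun v => black v = true)

/-- The set of white nodes. -/
def whiteNodes (T : ParentTree α) (black : α → Bool) : Finset α :=
  Finset.univ.filter (fun v => black v = false)

/-- The set of leaves. -/
def leaves (T : ParentTree α) : Finset α :=
  Finset.univ.filter (fun v => children T v = ∅)

/-- A black-white tree: every leaf is black, and every non-root node with exactly one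
child is black. -/
def BlackWhite (T : ParentTree α) (black : α → Bool) : Prop :=
  (∀ v, children T v = ∅ → black v = true) ∧
  (∀ v, v ≠ T.root → (children T v).card = 1 → black v = true)

/-
Every non-root node is the child of exactly one node, so the children counts sum to `|V| - 1`.
A white node other than the root has at least two children, and a white root at least one;
hence `2 W ≤ |V| - 1 + 1 = W + B`, and `2 W ≤ W + B - 1` when the root is black or has two
children.
-/

lemma edgeNodes_eq_erase_root (T : ParentTree α) : edgeNodes T = univ.erase T.root := by
  ext v
  simp [edgeNodes]

lemma card_edgeNodes (T : ParentTree α) : (edgeNodes T).card = Fintype.card α - 1 := by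
  rw [edgeNodes_eq_erase_root, card_erase_of_mem (mem_univ _), card_univ]

lemma sum_card_children (T : ParentTree α) :
    ∑ v, (children T v).card = (edgeNodes T).card := by
  rw [card_eq_sum_card_fiberwise (f := T.parent) (t := univ) fun _ _ => mem_univ _]
  refine sum_congr rfl fun v _ => congrArg card ?_
  ext u
  simp [edgeNodes, children]

omit [DecidableEq α] in
lemma card_whiteNodes_add_card_blackNodes (T : ParentTree α) (black : α → Bool) :
    (whiteNodes T black).card + (blackNodes T black).card = Fintype.card α := by
  rw [← card_univ, ← card_filter_add_card_filter_not (s := univ) (p := fun v => black v = false)]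
  simp only [whiteNodes, blackNodes, Bool.not_eq_false]

namespace BlackWhite

variable {T : ParentTree α} {black : α → Bool} {v : α}

lemma one_le_card_children (hbw : BlackWhite T black) (hv : black v = false) :
    1 ≤ (children T v).card := by
  rw [Nat.one_le_iff_ne_zero, Ne, card_eq_zero]
  intro h
  simp [hbw.1 v h] at hv

lemma two_le_card_children (hbw : BlackWhite T black) (hv : black v = false)
    (hvr : v ≠ T.root) : 2 ≤ (children T v).card := by
  have h1 := hbw.one_le_card_children hv
  have hne : (children T v).card ≠ 1 := fun h => by simp [hbw.2 v hvr h] at hv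
  omega

end BlackWhite

lemma card_whiteNodes_add_one_le (T : ParentTree α) (black : α → Bool) (m : ℕ)
    (h : ∀ v, black v = false → 2 ≤ (children T v).card + if v = T.root then m else 0) :
    (whiteNodes T black).card + 1 ≤ (blackNodes T black).card + m := by
  have hdeficit : ∑ v ∈ whiteNodes T black, (if v = T.root then m else 0) ≤ m := by
    rw [sum_ite_eq']
    split_ifs <;> omega
  have hchildren : ∑ v ∈ whiteNodes T black, (children T v).card ≤ Fintype.card α - 1 := by
    rw [← card_edgeNodes, ← sum_card_children]
    exact sum_le_sum_of_subset (subset_univ _)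
  have hweights : 2 * (whiteNodes T black).card ≤
      ∑ v ∈ whiteNodes T black, ((children T v).card + if v = T.root then m else 0) := by
    rw [mul_comm, ← smul_eq_mul, ← sum_const]
    exact sum_le_sum fun v hv => h v (mem_filter.mp hv).2
  rw [sum_add_distrib] at hweights
  have hpos : 0 < Fintype.card α := Fintype.card_pos_iff.mpr ⟨T.root⟩
  have := card_whiteNodes_add_card_blackNodes T black
  omega

theorem stmt9 (T : ParentTree α) (black : α → Bool) (hbw : BlackWhite T black) :
    (whiteNodes T black).card ≤ (blackNodes T black).card ∧
    ((black T.root = true ∨ 2 ≤ (children T T.root).card) →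
      (whiteNodes T black).card ≤ (blackNodes T black).card - 1) := by
  constructor
  · have := card_whiteNodes_add_one_le T black 1 fun v hv => by
      split_ifs with hvr
      · have := hbw.one_le_card_children hv
        omega
      · simpa using hbw.two_le_card_children hv hvr
    omega
  · intro hroot
    have := card_whiteNodes_add_one_le T black 0 fun v hv => by
      rw [ite_self, add_zero]
      by_cases hvr : v = T.root
      · subst hvr
        simpa [hv] using hroot
      · exact hbw.two_le_card_children hv hvr
    omega
end

section
/- Let T = (B ∪ W, I) be a finite rooted black-white tree (every leaf black, every non-root node with one child black) with edge weights w(e) ≤ 5. Call an edge heavy if w(e) ≥ 3, and say T has no bad pair if for any two heavy edges e, e' with e strictly below e' on a root-to-leaf path, some black node lies on the path between them (possibly at an endpoint between them). If T has no bad pair, then Σ_{e ∈ I} w(e) ≤ 7|B| − 2. -/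
open Finset

variable {α : Type*} [Fintype α] [DecidableEq α]

/-- An edge (identified with its lower endpoint) is heavy if its weight is at least 3. -/
def Heavy (T : ParentTree α) (w : α → ℕ) (v : α) : Prop :=
  v ≠ T.root ∧ 3 ≤ w v

open Classical in
noncomputable def pdepth (T : ParentTree α) (v : α) : ℕ := Nat.find (T.reach v)

lemma pdepth_spec (T : ParentTree α) (v : α) : T.parent^[pdepth T v] v = T.root := by
  classical exact Nat.find_spec (T.reach v)

lemma pdepth_lt (T : ParentTree α) {u v : α} (hu : u ≠ T.root) (hp : T.parent u = v) :
    pdepth T v < pdepth T u := by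
  classical
  have h1 : 1 ≤ pdepth T u := by
    rcases Nat.eq_zero_or_pos (pdepth T u) with h | h
    · exfalso; apply hu
      have := pdepth_spec T u
      rwa [h, Function.iterate_zero_apply] at this
    · exact h
  have hroot : T.parent^[pdepth T u - 1] v = T.root := by
    have hs := pdepth_spec T u
    rw [show pdepth T u = (pdepth T u - 1) + 1 by omega,
      Function.iterate_succ_apply, hp] at hs
    exact hs
  have h2 : pdepth T v ≤ pdepth T u - 1 := Nat.find_min' _ hroot
  omega

lemma exists_black_desc (T : ParentTree α) (black : α → Bool)
    (hleaf : ∀ v, children T v = ∅ → black v = true) (v : α) :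
    ∃ k d, black d = true ∧ T.parent^[k] d = v := by
  classical
  set S : Finset α := univ.filter (fun d => ∃ k, T.parent^[k] d = v) with hS
  have hvS : v ∈ S := by
    simp only [hS, mem_filter, mem_univ, true_and]
    exact ⟨0, rfl⟩
  obtain ⟨d, hdS, hmax⟩ := S.exists_max_image (pdepth T) ⟨v, hvS⟩
  obtain ⟨k, hk⟩ : ∃ k, T.parent^[k] d = v := by
    simpa only [hS, mem_filter, mem_univ, true_and] using hdS
  by_cases hc : children T d = ∅
  · exact ⟨k, d, hleaf d hc, hk⟩
  · exfalso
    obtain ⟨c, hcm⟩ := Finset.nonempty_iff_ne_empty.mpr hc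
    simp only [children, mem_filter, mem_univ, true_and] at hcm
    obtain ⟨hcr, hcp⟩ := hcm
    have hcS : c ∈ S := by
      simp only [hS, mem_filter, mem_univ, true_and]
      exact ⟨k + 1, by rw [Function.iterate_succ_apply, hcp, hk]⟩
    have h1 := hmax c hcS
    have h2 := pdepth_lt T hcr hcp
    omega

lemma sum_children_card (T : ParentTree α) :
    ∑ v : α, (children T v).card = (edgeNodes T).card := by
  classical
  rw [Finset.card_eq_sum_card_fiberwise (f := T.parent) (t := univ)
    (fun a _ => mem_univ _)]
  apply Finset.sum_congr rfl
  intro v _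
  congr 1
  ext u
  simp only [children, edgeNodes, mem_filter, mem_univ, true_and, and_comm]

lemma leaves_nonempty (T : ParentTree α) : (leaves T).Nonempty := by
  classical
  obtain ⟨d, _, hmax⟩ := Finset.exists_max_image univ (pdepth T) ⟨T.root, mem_univ _⟩
  refine ⟨d, ?_⟩
  simp only [leaves, mem_filter, mem_univ, true_and]
  by_contra hc
  obtain ⟨c, hcm⟩ := Finset.nonempty_iff_ne_empty.mpr hc
  simp only [children, mem_filter, mem_univ, true_and] at hcm
  have h1 := hmax c (mem_univ _)
  have h2 := pdepth_lt T hcm.1 hcm.2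
  omega

lemma white_le_black (T : ParentTree α) (black : α → Bool) (hbw : BlackWhite T black) :
    (whiteNodes T black).card ≤ (blackNodes T black).card := by
  classical
  set M : Finset α := univ.filter (fun v => 2 ≤ (children T v).card) with hM
  set L : Finset α := leaves T with hL
  -- leaves are black
  have hLB : L ⊆ blackNodes T black := by
    intro v hv
    simp only [hL, leaves, mem_filter, mem_univ, true_and] at hv
    simp only [blackNodes, mem_filter, mem_univ, true_and]
    exact hbw.1 v hv
  -- sum of children cards bounds
  have hsplit : ∑ v ∈ M, (children T v).card + ∑ v ∈ univ \ M, (children T v).card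
      = (edgeNodes T).card := by
    rw [← sum_children_card T, add_comm, Finset.sum_sdiff (Finset.filter_subset _ _)]
  have hMsum : 2 * M.card ≤ ∑ v ∈ M, (children T v).card := by
    calc 2 * M.card = ∑ _v ∈ M, 2 := by rw [Finset.sum_const, smul_eq_mul, mul_comm]
    _ ≤ _ := Finset.sum_le_sum (fun v hv => by
        simp only [hM, mem_filter] at hv; exact hv.2)
  have hcompl : (univ \ M).card - L.card ≤ ∑ v ∈ univ \ M, (children T v).card := by
    have hsub : (univ \ M) \ L ⊆ univ \ M := Finset.sdiff_subset
    have h1 : ((univ \ M) \ L).card ≤ ∑ v ∈ (univ \ M) \ L, (children T v).card := by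
      calc ((univ \ M) \ L).card = ∑ _v ∈ (univ \ M) \ L, 1 := by
            rw [Finset.sum_const, smul_eq_mul, mul_one]
      _ ≤ _ := Finset.sum_le_sum (fun v hv => by
          simp only [Finset.mem_sdiff, hL, leaves, mem_filter, mem_univ, true_and] at hv
          have : (children T v) ≠ ∅ := hv.2
          have := Finset.nonempty_iff_ne_empty.mpr this
          exact Finset.card_pos.mpr this)
    have h2 : (univ \ M).card ≤ ((univ \ M) \ L).card + L.card :=
      Finset.card_le_card_sdiff_add_card
    have h3 : ∑ v ∈ (univ \ M) \ L, (children T v).card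
        ≤ ∑ v ∈ univ \ M, (children T v).card :=
      Finset.sum_le_sum_of_subset hsub
    omega
  have hcardM : (univ \ M).card = Fintype.card α - M.card := by
    rw [Finset.card_sdiff_of_subset (Finset.subset_univ _), Finset.card_univ]
  have hMle : M.card ≤ Fintype.card α := by
    rw [← Finset.card_univ]; exact Finset.card_le_card (Finset.subset_univ _)
  have hedge : (edgeNodes T).card = Fintype.card α - 1 := by
    have : edgeNodes T = univ.erase T.root := by
      ext u; simp [edgeNodes, Finset.mem_erase]
    rw [this, Finset.card_erase_of_mem (mem_univ _), Finset.card_univ]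
  have hn1 : 1 ≤ Fintype.card α := Fintype.card_pos_iff.mpr ⟨T.root⟩
  have hML : M.card + 1 ≤ L.card := by omega
  -- whites minus root are in M
  have hWM : whiteNodes T black \ {T.root} ⊆ M := by
    intro v hv
    simp only [Finset.mem_sdiff, whiteNodes, mem_filter, mem_univ, true_and,
      Finset.mem_singleton] at hv
    obtain ⟨hvw, hvr⟩ := hv
    simp only [hM, mem_filter, mem_univ, true_and]
    by_contra hlt
    push_neg at hlt
    interval_cases h : (children T v).card
    · have := hbw.1 v (Finset.card_eq_zero.mp h)
      simp [hvw] at this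
    · have := hbw.2 v hvr h
      simp [hvw] at this
  have hW1 : (whiteNodes T black).card ≤ (whiteNodes T black \ {T.root}).card + 1 := by
    have := Finset.card_le_card_sdiff_add_card
      (s := whiteNodes T black) (t := ({T.root} : Finset α))
    simpa using this
  have hW2 : (whiteNodes T black \ {T.root}).card ≤ M.card := Finset.card_le_card hWM
  have hLB' : L.card ≤ (blackNodes T black).card := Finset.card_le_card hLB
  omega

theorem stmt11 (T : ParentTree α) (black : α → Bool) (hbw : BlackWhite T black)
    (w : α → ℕ) (hw5 : ∀ v ∈ edgeNodes T, w v ≤ 5)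
    (hnb : ∀ v v' : α, Heavy T w v → Heavy T w v' →
      ∀ n, 1 ≤ n → T.parent^[n] v = v' →
        ∃ j, 1 ≤ j ∧ j ≤ n ∧ black (T.parent^[j] v) = true) :
    ∑ v ∈ edgeNodes T, w v ≤ 7 * (blackNodes T black).card - 2 := by
  classical
  -- choice of nearest black descendant
  have hex : ∀ v, ∃ k, ∃ d, black d = true ∧ T.parent^[k] d = v := by
    intro v
    obtain ⟨k, d, h1, h2⟩ := exists_black_desc T black hbw.1 v
    exact ⟨k, d, h1, h2⟩
  set K : α → ℕ := fun v => Nat.find (hex v) with hK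
  set D : α → α := fun v => Classical.choose (Nat.find_spec (hex v)) with hDdef
  have hD : ∀ v, black (D v) = true ∧ T.parent^[K v] (D v) = v := by
    intro v; exact Classical.choose_spec (Nat.find_spec (hex v))
  have hKmin : ∀ v m d, black d = true → T.parent^[m] d = v → K v ≤ m := by
    intro v m d h1 h2
    exact Nat.find_min' (hex v) ⟨d, h1, h2⟩
  set H : Finset α := (edgeNodes T).filter (fun v => Heavy T w v) with hH
  -- key asymmetric claim
  have key : ∀ v1 v2, v1 ∈ H → v2 ∈ H → K v2 < K v1 → D v1 ≠ D v2 := by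
    intro v1 v2 h1 h2 hlt heq
    simp only [hH, mem_filter] at h1 h2
    obtain ⟨hb1, hp1⟩ := hD v1
    obtain ⟨hb2, hp2⟩ := hD v2
    rw [heq] at hp1
    set b := D v2
    have hchain : T.parent^[K v1 - K v2] v2 = v1 := by
      have h := Function.iterate_add_apply T.parent (K v1 - K v2) (K v2) b
      rw [show K v1 - K v2 + K v2 = K v1 by omega, hp1, hp2] at h
      exact h.symm
    obtain ⟨j, hj1, hj2, hjb⟩ := hnb v2 v1 h2.2 h1.2 (K v1 - K v2) (by omega) hchain
    have hjb' : T.parent^[j] v2 = T.parent^[j + K v2] b := by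
      rw [Function.iterate_add_apply, hp2]
    have hmem : T.parent^[K v1 - (j + K v2)] (T.parent^[j + K v2] b) = v1 := by
      have h := Function.iterate_add_apply T.parent (K v1 - (j + K v2)) (j + K v2) b
      rw [show K v1 - (j + K v2) + (j + K v2) = K v1 by omega, hp1] at h
      exact h.symm
    have := hKmin v1 (K v1 - (j + K v2)) (T.parent^[j + K v2] b)
      (by rw [← hjb']; exact hjb) hmem
    omega
  -- injectivity of D on H
  have hinj : Set.InjOn D ↑H := by
    intro v1 h1 v2 h2 heq
    by_contra hne
    rcases lt_trichotomy (K v1) (K v2) with h | h | h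
    · exact key v2 v1 h2 h1 h heq.symm
    · apply hne
      obtain ⟨_, hp1⟩ := hD v1
      obtain ⟨_, hp2⟩ := hD v2
      rw [← hp1, ← hp2, heq, h]
    · exact key v1 v2 h1 h2 h heq
  have hmaps : ∀ v ∈ H, D v ∈ blackNodes T black := by
    intro v _
    simp only [blackNodes, mem_filter, mem_univ, true_and]
    exact (hD v).1
  have ht : H.card ≤ (blackNodes T black).card :=
    Finset.card_le_card_of_injOn D hmaps hinj
  -- sum bounds
  have hsum : ∑ v ∈ edgeNodes T, w v
      = ∑ v ∈ H, w v + ∑ v ∈ (edgeNodes T).filter (fun v => ¬ Heavy T w v), w v := by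
    rw [hH, Finset.sum_filter_add_sum_filter_not]
  have hheavy : ∑ v ∈ H, w v ≤ 5 * H.card := by
    calc ∑ v ∈ H, w v ≤ ∑ v ∈ H, 5 := Finset.sum_le_sum (fun v hv => by
        simp only [hH, mem_filter] at hv; exact hw5 v hv.1)
    _ = 5 * H.card := by rw [Finset.sum_const, smul_eq_mul, mul_comm]
  have hlight : ∑ v ∈ (edgeNodes T).filter (fun v => ¬ Heavy T w v), w v
      ≤ 2 * ((edgeNodes T).filter (fun v => ¬ Heavy T w v)).card := by
    calc ∑ v ∈ (edgeNodes T).filter (fun v => ¬ Heavy T w v), w v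
        ≤ ∑ _v ∈ (edgeNodes T).filter (fun v => ¬ Heavy T w v), 2 :=
          Finset.sum_le_sum (fun v hv => by
            simp only [mem_filter, Heavy, edgeNodes, mem_univ, true_and, not_and,
              not_le] at hv
            have := hv.2 hv.1
            omega)
    _ = _ := by rw [Finset.sum_const, smul_eq_mul, mul_comm]
  have hcards : H.card + ((edgeNodes T).filter (fun v => ¬ Heavy T w v)).card
      = (edgeNodes T).card := by
    rw [hH, Finset.card_filter_add_card_filter_not]
  -- global cardinalities
  have hedge : (edgeNodes T).card = Fintype.card α - 1 := by
    have : edgeNodes T = univ.erase T.root := by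
      ext u; simp [edgeNodes, Finset.mem_erase]
    rw [this, Finset.card_erase_of_mem (mem_univ _), Finset.card_univ]
  have hBW : (blackNodes T black).card + (whiteNodes T black).card = Fintype.card α := by
    have : whiteNodes T black = univ.filter (fun v => ¬ (black v = true)) := by
      ext u; simp [whiteNodes, blackNodes]
    rw [blackNodes, this, Finset.card_filter_add_card_filter_not,
      Finset.card_univ]
  have hWB := white_le_black T black hbw
  have hBpos : 1 ≤ (blackNodes T black).card := by
    obtain ⟨v, hv⟩ := leaves_nonempty T
    refine Finset.card_pos.mpr ⟨v, ?_⟩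
    simp only [leaves, mem_filter, mem_univ, true_and] at hv
    simp only [blackNodes, mem_filter, mem_univ, true_and]
    exact hbw.1 v hv
  have hn1 : 1 ≤ Fintype.card α := Fintype.card_pos_iff.mpr ⟨T.root⟩
  omega
end

section
/- Let T = (B ∪ W, I) be a finite rooted black-white tree (every leaf black, every non-root node with one child black) with edge weights w : I → {0,...,5} such that: (i) every edge of weight 5 has both endpoints black; (ii) for any 'bad pair' (e, e') of heavy edges (e below e', no black node between them), w(e) ≤ 4, w(e') = 3, e' has black upper endpoint, and there is no heavy edge strictly between e and e'; (iii) every edge of weight 3 or more that is an upper edge of a bad pair has weight exactly 3. Let H* be the set of heavy edges that are not upper edges of bad pairs, and for each e ∈ H* assign injectively a black node b_e below e with no heavy edge between e and b_e; let B* = {b_e}. Then Σ_{e ∈ I} w(e) ≤ 3|B| + |L| + 2|B*| − 2, where L is the set of leaves; and the bound improves to −4 if the root is black or has at least 2 children. -/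
open Finset

variable {α : Type*} [Fintype α] [DecidableEq α]

/-- `(v, v')` is a bad pair: both edges are heavy, the edge of `v` is strictly below the
edge of `v'`, and no node on the path between the two edges is black. -/
def BadPair (T : ParentTree α) (w : α → ℕ) (black : α → Bool) (v v' : α) : Prop :=
  Heavy T w v ∧ Heavy T w v' ∧
    ∃ n, 1 ≤ n ∧ T.parent^[n] v = v' ∧
      ∀ j, 1 ≤ j → j ≤ n → black (T.parent^[j] v) = false

/-- A heavy edge that is not the upper edge of any bad pair. -/
def HStar (T : ParentTree α) (w : α → ℕ) (black : α → Bool) (v : α) : Prop :=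
  Heavy T w v ∧ ∀ u, ¬ BadPair T w black u v

set_option linter.unusedSectionVars false
set_option linter.unusedVariables false

lemma isDesc_refl (T : ParentTree α) (v : α) : IsDesc T v v := ⟨0, rfl⟩

lemma isDesc_trans {T : ParentTree α} {a b c : α} (h1 : IsDesc T a b) (h2 : IsDesc T b c) :
    IsDesc T a c := by
  obtain ⟨m, hm⟩ := h1; obtain ⟨n, hn⟩ := h2
  exact ⟨n + m, by rw [Function.iterate_add_apply, hm, hn]⟩

lemma fix_eq_root {T : ParentTree α} {v : α} (h : T.parent v = v) : v = T.root := by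
  obtain ⟨n, hn⟩ := T.reach v
  rw [Function.iterate_fixed h n] at hn; exact hn

lemma isDesc_antisymm {T : ParentTree α} {u v : α} :
    IsDesc T u v → IsDesc T v u → u = v := by
  rintro ⟨m, hm⟩ ⟨n, hn⟩
  by_cases hmn : n + m = 0
  · obtain ⟨rfl, rfl⟩ : n = 0 ∧ m = 0 := by omega
    simpa using hm
  · set k := n + m with hk
    have hper : T.parent^[k] u = u := by
      rw [hk, Function.iterate_add_apply, hm, hn]
    have hmul : ∀ q, T.parent^[q * k] u = u := by
      intro q; induction q with
      | zero => simp
      | succ q ih => rw [Nat.succ_mul, Function.iterate_add_apply, hper, ih]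
    obtain ⟨N, hN⟩ := T.reach u
    have hroot : T.parent^[N % k] u = T.root := by
      have h2 : T.parent^[N % k + (N / k) * k] u = T.root := by
        rwa [Nat.mod_add_div' N k]
      rwa [Function.iterate_add_apply, hmul] at h2
    have hrk : N % k < k := Nat.mod_lt _ (by omega)
    have hu : u = T.root := by
      have : T.parent^[k - N % k + N % k] u = u := by
        rw [Nat.sub_add_cancel hrk.le]; exact hper
      rw [Function.iterate_add_apply, hroot, Function.iterate_fixed T.root_fix] at this
      exact this.symm
    have hv : v = T.root := by
      rw [← hm, hu, Function.iterate_fixed T.root_fix]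
    rw [hu, hv]

lemma isDesc_total {T : ParentTree α} {u a b : α} :
    IsDesc T u a → IsDesc T u b → IsDesc T a b ∨ IsDesc T b a := by
  rintro ⟨m, hm⟩ ⟨n, hn⟩
  rcases le_total m n with h | h
  · exact Or.inl ⟨n - m, by rw [← hm, ← Function.iterate_add_apply, Nat.sub_add_cancel h, hn]⟩
  · exact Or.inr ⟨m - n, by rw [← hn, ← Function.iterate_add_apply, Nat.sub_add_cancel h, hm]⟩

lemma isDesc_parent {T : ParentTree α} {a b : α} (h : IsDesc T a b) (hne : a ≠ b) :
    IsDesc T (T.parent a) b := by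
  obtain ⟨n, hn⟩ := h
  match n, hn with
  | 0, hn => exact absurd hn hne
  | (m+1), hn => exact ⟨m, by rwa [Function.iterate_succ_apply] at hn⟩

open Classical in
noncomputable def desc (T : ParentTree α) (v : α) : Finset α :=
  Finset.univ.filter (fun u => IsDesc T u v)

lemma mem_desc {T : ParentTree α} {u v : α} : u ∈ desc T v ↔ IsDesc T u v := by
  simp [desc]

lemma mem_children {T : ParentTree α} {u v : α} :
    u ∈ children T v ↔ u ≠ T.root ∧ T.parent u = v := by simp [children]

lemma child_isDesc {T : ParentTree α} {c v : α} (hc : c ∈ children T v) : IsDesc T c v :=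
  ⟨1, by simpa using (mem_children.1 hc).2⟩

lemma desc_subset_of_child {T : ParentTree α} {c v : α} (hc : c ∈ children T v) :
    desc T c ⊆ desc T v := fun u hu =>
  mem_desc.2 (isDesc_trans (mem_desc.1 hu) (child_isDesc hc))

lemma not_self_mem_desc_child {T : ParentTree α} {c v : α} (hc : c ∈ children T v) :
    v ∉ desc T c := by
  intro h
  have heq : v = c := isDesc_antisymm (mem_desc.1 h) (child_isDesc hc)
  have : c = T.root := fix_eq_root (by rw [(mem_children.1 hc).2, heq])
  exact (mem_children.1 hc).1 this

lemma desc_child_ssubset {T : ParentTree α} {c v : α} (hc : c ∈ children T v) :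
    desc T c ⊂ desc T v :=
  ⟨desc_subset_of_child hc, fun h =>
    not_self_mem_desc_child hc (h (mem_desc.2 (isDesc_refl T v)))⟩

lemma desc_eq {T : ParentTree α} (v : α) :
    desc T v = insert v ((children T v).biUnion (fun c => desc T c)) := by
  classical
  ext u
  simp only [Finset.mem_insert, Finset.mem_biUnion, mem_desc]
  constructor
  · rintro h
    by_cases huv : u = v
    · exact Or.inl huv
    · obtain ⟨n, hn⟩ := h
      have hex : ∃ n, T.parent^[n] u = v := ⟨n, hn⟩
      have hfind : T.parent^[Nat.find hex] u = v := Nat.find_spec hex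
      have hpos : Nat.find hex ≠ 0 := fun h0 => huv (by rw [h0] at hfind; exact hfind)
      obtain ⟨m, hm1⟩ : ∃ m, Nat.find hex = m + 1 := ⟨Nat.find hex - 1, by omega⟩
      rw [hm1] at hfind
      have hpc : T.parent (T.parent^[m] u) = v := by
        rw [Function.iterate_succ_apply'] at hfind; exact hfind
      have hcr : T.parent^[m] u ≠ T.root := by
        intro hcr
        have hmv : T.parent^[m] u = v := by rw [hcr, ← hpc, hcr, T.root_fix]
        exact Nat.find_min hex (by omega) hmv
      exact Or.inr ⟨_, mem_children.2 ⟨hcr, hpc⟩, ⟨m, rfl⟩⟩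
  · rintro (rfl | ⟨c, hc, hu⟩)
    · exact isDesc_refl T u
    · exact isDesc_trans hu (child_isDesc hc)

lemma desc_disjoint {T : ParentTree α} {v : α} {c c' : α} (hc : c ∈ children T v)
    (hc' : c' ∈ children T v) (hne : c ≠ c') : Disjoint (desc T c) (desc T c') := by
  rw [Finset.disjoint_left]
  intro u hu hu'
  have key : ∀ a b : α, a ∈ children T v → b ∈ children T v → a ≠ b → IsDesc T a b → False := by
    intro a b ha hb hab hd
    have h1 : IsDesc T v b := by
      have := isDesc_parent hd hab
      rwa [(mem_children.1 ha).2] at this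
    have h2 : v = b := isDesc_antisymm h1 (child_isDesc hb)
    have : b = T.root := fix_eq_root (by rw [(mem_children.1 hb).2, h2])
    exact (mem_children.1 hb).1 this
  rcases isDesc_total (mem_desc.1 hu) (mem_desc.1 hu') with h | h
  · exact key c c' hc hc' hne h
  · exact key c' c hc' hc hne.symm h

lemma sum_desc {T : ParentTree α} (v : α) (g : α → ℕ) :
    ∑ u ∈ desc T v, g u = g v + ∑ c ∈ children T v, ∑ u ∈ desc T c, g u := by
  classical
  rw [desc_eq, Finset.sum_insert, Finset.sum_biUnion]
  · intro c hc c' hc' hne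
    exact desc_disjoint (by simpa using hc) (by simpa using hc') hne
  · intro h
    simp only [Finset.mem_biUnion] at h
    obtain ⟨c, hc, hv⟩ := h
    exact not_self_mem_desc_child hc hv

lemma self_mem_desc {T : ParentTree α} (v : α) : v ∈ desc T v := mem_desc.2 (isDesc_refl T v)

lemma sum_desc_erase {T : ParentTree α} (v : α) (g : α → ℕ) :
    ∑ u ∈ (desc T v).erase v, g u
      = ∑ c ∈ children T v, (g c + ∑ u ∈ (desc T c).erase c, g u) := by
  classical
  have h1 : ∑ u ∈ (desc T v).erase v, g u + g v = ∑ u ∈ desc T v, g u :=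
    Finset.sum_erase_add _ _ (self_mem_desc v)
  have h2 : ∀ c, ∑ u ∈ (desc T c).erase c, g u + g c = ∑ u ∈ desc T c, g u :=
    fun c => Finset.sum_erase_add _ _ (self_mem_desc c)
  have h3 := sum_desc (T := T) v g
  have h4 : ∑ c ∈ children T v, ∑ u ∈ desc T c, g u
      = ∑ c ∈ children T v, (g c + ∑ u ∈ (desc T c).erase c, g u) := by
    refine Finset.sum_congr rfl fun c _ => ?_
    rw [← h2 c]; omega
  omega

/-- token count of a node -/
def tok (T : ParentTree α) (black : α → Bool) (u : α) : ℕ :=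
  3 * (if black u = true then 1 else 0) + (if children T u = ∅ then 1 else 0)

lemma core (T : ParentTree α) (black : α → Bool) (hbw : BlackWhite T black)
    (w' : α → ℕ) (hw3 : ∀ v, v ≠ T.root → w' v ≤ 3)
    (h3 : ∀ v, v ≠ T.root → w' v = 3 → black (T.parent v) = true) :
    ∀ v, (black v = true ∨ (children T v).card ≠ 1 ∨ v ≠ T.root) →
      4 + ∑ u ∈ (desc T v).erase v, w' u ≤ ∑ u ∈ desc T v, tok T black u := by
  classical
  have main : ∀ n v, (desc T v).card = n →
      (black v = true ∨ (children T v).card ≠ 1 ∨ v ≠ T.root) →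
      4 + ∑ u ∈ (desc T v).erase v, w' u ≤ ∑ u ∈ desc T v, tok T black u := by
    intro n
    induction n using Nat.strong_induction_on with
    | _ n ih =>
      intro v hcard hcond
      by_cases hleaf : children T v = ∅
      · -- leaf case
        have hblack : black v = true := hbw.1 v hleaf
        have hdesc : desc T v = {v} := by
          rw [desc_eq, hleaf]; simp
        rw [hdesc]
        simp [tok, hblack, hleaf]
      · -- internal case
        have hk : 1 ≤ (children T v).card := Nat.one_le_iff_ne_zero.2 (by
          simpa [Finset.card_eq_zero] using hleaf)
        -- apply IH to each child
        have hIH : ∀ c ∈ children T v,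
            4 + ∑ u ∈ (desc T c).erase c, w' u ≤ ∑ u ∈ desc T c, tok T black u := by
          intro c hc
          have hlt : (desc T c).card < n := by
            rw [← hcard]; exact Finset.card_lt_card (desc_child_ssubset hc)
          exact ih _ hlt c rfl (Or.inr (Or.inr (mem_children.1 hc).1))
        rw [sum_desc_erase, sum_desc (T := T) v (tok T black)]
        have hsum1 : ∑ c ∈ children T v, (4 + ∑ u ∈ (desc T c).erase c, w' u)
            ≤ ∑ c ∈ children T v, ∑ u ∈ desc T c, tok T black u :=
          Finset.sum_le_sum hIH
        rw [Finset.sum_add_distrib] at hsum1 ⊢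
        rw [Finset.sum_const, smul_eq_mul] at hsum1
        -- need: 4 + (∑ w' c + ∑ S_c) ≤ tok v + (∑ T_c)
        -- bound ∑ w' c
        by_cases hblack : black v = true
        · have hwc : ∑ c ∈ children T v, w' c ≤ ∑ c ∈ children T v, 3 :=
            Finset.sum_le_sum (fun c hc => hw3 c (mem_children.1 hc).1)
          rw [Finset.sum_const, smul_eq_mul] at hwc
          have htv : 3 ≤ tok T black v := by simp [tok, hblack]
          omega
        · -- white internal node: every child edge weight ≤ 2, and ≥ 2 children
          have hwc : ∑ c ∈ children T v, w' c ≤ ∑ c ∈ children T v, 2 := by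
            refine Finset.sum_le_sum (fun c hc => ?_)
            have h1 := hw3 c (mem_children.1 hc).1
            by_contra hgt
            have he : w' c = 3 := by omega
            have := h3 c (mem_children.1 hc).1 he
            rw [(mem_children.1 hc).2] at this
            exact hblack this
          rw [Finset.sum_const, smul_eq_mul] at hwc
          have hk2 : 2 ≤ (children T v).card := by
            rcases hcond with h | h | h
            · exact absurd h hblack
            · omega
            · by_contra hlt
              have h1 : (children T v).card = 1 := by omega
              exact hblack (hbw.2 v h h1)
          omega
  intro v hcond
  exact main _ v rfl hcond

lemma mem_edgeNodes {T : ParentTree α} {v : α} : v ∈ edgeNodes T ↔ v ≠ T.root := by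
  simp [edgeNodes]

lemma desc_root (T : ParentTree α) : desc T T.root = Finset.univ :=
  Finset.eq_univ_iff_forall.2 fun u => mem_desc.2 (T.reach u)

lemma edgeNodes_eq (T : ParentTree α) : edgeNodes T = (desc T T.root).erase T.root := by
  ext u
  simp [edgeNodes, desc_root, Finset.mem_erase]

lemma root_bound (T : ParentTree α) (black : α → Bool) (hbw : BlackWhite T black)
    (w' : α → ℕ) (hw3 : ∀ v, v ≠ T.root → w' v ≤ 3)
    (h3 : ∀ v, v ≠ T.root → w' v = 3 → black (T.parent v) = true) :
    (2 + ∑ u ∈ edgeNodes T, w' u ≤ ∑ u : α, tok T black u) ∧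
    ((black T.root = true ∨ 2 ≤ (children T T.root).card) →
      4 + ∑ u ∈ edgeNodes T, w' u ≤ ∑ u : α, tok T black u) := by
  classical
  have hrw : ∑ u ∈ edgeNodes T, w' u = ∑ u ∈ (desc T T.root).erase T.root, w' u := by
    rw [edgeNodes_eq]
  have hrt : ∑ u : α, tok T black u = ∑ u ∈ desc T T.root, tok T black u := by
    rw [desc_root]
  have strong : (black T.root = true ∨ (children T T.root).card ≠ 1) →
      4 + ∑ u ∈ edgeNodes T, w' u ≤ ∑ u : α, tok T black u := by
    intro h
    rw [hrw, hrt]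
    exact core T black hbw w' hw3 h3 T.root (by tauto)
  constructor
  · by_cases h : black T.root = true ∨ (children T T.root).card ≠ 1
    · have := strong h; omega
    · push_neg at h
      obtain ⟨hwhite, hone⟩ := h
      obtain ⟨c, hc⟩ := Finset.card_eq_one.1 hone
      have hcm : c ∈ children T T.root := by rw [hc]; exact Finset.mem_singleton_self c
      have hcr : c ≠ T.root := (mem_children.1 hcm).1
      have hnl : children T T.root ≠ ∅ := by
        rw [hc]; simp
      have hIH := core T black hbw w' hw3 h3 c (Or.inr (Or.inr hcr))
      have hwc : w' c ≤ 2 := by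
        have h1 := hw3 c hcr
        by_contra hgt
        have he : w' c = 3 := by omega
        have := h3 c hcr he
        rw [(mem_children.1 hcm).2] at this
        rw [this] at hwhite; exact hwhite rfl
      rw [hrw, hrt, sum_desc_erase, sum_desc (T := T) T.root (tok T black), hc,
        Finset.sum_singleton, Finset.sum_singleton]
      omega
  · intro h
    refine strong ?_
    rcases h with h | h
    · exact Or.inl h
    · exact Or.inr (by omega)

theorem stmt12 (T : ParentTree α) (black : α → Bool) (hbw : BlackWhite T black)
    (w : α → ℕ) (hw5 : ∀ v ∈ edgeNodes T, w v ≤ 5)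
    (h5 : ∀ v ∈ edgeNodes T, w v = 5 → black v = true ∧ black (T.parent v) = true)
    (hbad : ∀ v v', BadPair T w black v v' →
      w v ≤ 4 ∧ w v' = 3 ∧ black (T.parent v') = true ∧
      ∀ n, T.parent^[n] v = v' → ∀ j, 1 ≤ j → j < n → ¬ Heavy T w (T.parent^[j] v))
    (f : α → α)
    (hf : ∀ v, HStar T w black v → black (f v) = true ∧
      ∃ m, T.parent^[m] (f v) = v ∧ ∀ j, j < m → ¬ Heavy T w (T.parent^[j] (f v)))
    (hinj : ∀ u v, HStar T w black u → HStar T w black v → f u = f v → u = v)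
    (BStar : Finset α) (hB : ∀ b, b ∈ BStar ↔ ∃ v, HStar T w black v ∧ f v = b) :
    ∑ v ∈ edgeNodes T, w v
      ≤ 3 * (blackNodes T black).card + (leaves T).card + 2 * BStar.card - 2 ∧
    ((black T.root = true ∨ 2 ≤ (children T T.root).card) →
      ∑ v ∈ edgeNodes T, w v
        ≤ 3 * (blackNodes T black).card + (leaves T).card + 2 * BStar.card - 4) := by
  classical
  set w' : α → ℕ := fun u => if HStar T w black u then w u - 2 else w u with hw'def
  -- basic facts about w'
  have hw3 : ∀ v, v ≠ T.root → w' v ≤ 3 := by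
    intro v hv
    have hv5 : w v ≤ 5 := hw5 v (mem_edgeNodes.2 hv)
    by_cases hs : HStar T w black v
    · simp only [hw'def, if_pos hs]; omega
    · simp only [hw'def, if_neg hs]
      by_cases hh : Heavy T w v
      · have hex : ∃ u, BadPair T w black u v := by
          by_contra hno; push_neg at hno; exact hs ⟨hh, hno⟩
        obtain ⟨u, hu⟩ := hex
        have := (hbad u v hu).2.1
        omega
      · have : ¬ (3 ≤ w v) := fun h => hh ⟨hv, h⟩
        omega
  have h3 : ∀ v, v ≠ T.root → w' v = 3 → black (T.parent v) = true := by
    intro v hv he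
    by_cases hs : HStar T w black v
    · have hge : 3 ≤ w v := hs.1.2
      have h5' : w v = 5 := by
        simp only [hw'def, if_pos hs] at he; omega
      exact (h5 v (mem_edgeNodes.2 hv) h5').2
    · simp only [hw'def, if_neg hs] at he
      by_cases hh : Heavy T w v
      · have hex : ∃ u, BadPair T w black u v := by
          by_contra hno; push_neg at hno; exact hs ⟨hh, hno⟩
        obtain ⟨u, hu⟩ := hex
        exact (hbad u v hu).2.2.1
      · exact absurd ⟨hv, by omega⟩ hh
  -- sum splitting
  set Hs : Finset α := (edgeNodes T).filter (fun u => HStar T w black u) with hHs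
  have hsplit : ∑ v ∈ edgeNodes T, w v = ∑ v ∈ edgeNodes T, w' v + 2 * Hs.card := by
    have hpt : ∀ v ∈ edgeNodes T, w v = w' v + (if HStar T w black v then 2 else 0) := by
      intro v hv
      by_cases hs : HStar T w black v
      · have hge : 3 ≤ w v := hs.1.2
        simp only [hw'def, if_pos hs]; omega
      · simp only [hw'def, if_neg hs]; omega
    rw [Finset.sum_congr rfl hpt, Finset.sum_add_distrib]
    congr 1
    rw [hHs]
    rw [← Finset.sum_filter]
    rw [Finset.sum_const, smul_eq_mul, mul_comm]
  have hcard : Hs.card = BStar.card := by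
    apply Finset.card_bij (fun a _ => f a)
    · intro a ha
      exact (hB (f a)).2 ⟨a, (Finset.mem_filter.1 ha).2, rfl⟩
    · intro a ha b hb hab
      exact hinj a b (Finset.mem_filter.1 ha).2 (Finset.mem_filter.1 hb).2 hab
    · intro b hb
      obtain ⟨v, hv, rfl⟩ := (hB b).1 hb
      exact ⟨v, Finset.mem_filter.2 ⟨mem_edgeNodes.2 hv.1.1, hv⟩, rfl⟩
  have htok : ∑ u : α, tok T black u = 3 * (blackNodes T black).card + (leaves T).card := by
    unfold tok
    rw [Finset.sum_add_distrib, ← Finset.mul_sum]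
    congr 1
    · congr 1
      rw [blackNodes, Finset.card_filter]
    · rw [leaves, Finset.card_filter]
  have hrb := root_bound T black hbw w' hw3 h3
  rw [htok] at hrb
  constructor
  · have := hrb.1; omega
  · intro h
    have := hrb.2 h; omega
end

section
/- Let F be a pliable family, I an inclusion-minimal cover of F such that every edge of I covers some F-core, L ⊆ F a laminar witness family for I augmented with V, and let S₁ be a white member of L (owning no core) whose unique child in L is S₀. If a core C satisfies C ∩ S₀ ≠ ∅ and C \ S₀ ≠ ∅ and C is not owned by S₀ or a descendant of S₀, and F satisfies property (γ), then S₁ \ S₀ ⊆ C. -/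
variable {V : Type*}

def CoversFam (I : Set (V × V)) (F : Set (Set V)) : Prop :=
  ∀ S ∈ F, ∃ e ∈ I, Covers e S

/-- Property (γ): for any edge set `I'` and nested sets `S₁ ⊂ S₂` of the residual family,
if a residual core `C` crosses both, then `S₂ \ (S₁ ∪ C)` is empty or in the residual family. -/
def PropertyGamma (F : Set (Set V)) : Prop :=
  ∀ (I' : Set (V × V)) (S₁ S₂ C : Set V),
    S₁ ∈ Residual F I' → S₂ ∈ Residual F I' → S₁ ⊂ S₂ →
    IsCore (Residual F I') C → Crosses C S₁ → Crosses C S₂ →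
    (S₂ \ (S₁ ∪ C) = ∅ ∨ S₂ \ (S₁ ∪ C) ∈ Residual F I')

def Laminar (L : Set (Set V)) : Prop :=
  ∀ A ∈ L, ∀ B ∈ L, Disjoint A B ∨ A ⊆ B ∨ B ⊆ A

/-- `S` owns `C` (with respect to `L`): `S` is an inclusion-minimal member of `L`
containing `C`. -/
def Owns (L : Set (Set V)) (S C : Set V) : Prop :=
  S ∈ L ∧ C ⊆ S ∧ ∀ S' ∈ L, C ⊆ S' → ¬ S' ⊂ S


lemma myMin {α : Type*} [Fintype α] {s : Set (Set α)} (hs : s.Nonempty) :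
    ∃ m ∈ s, ∀ x ∈ s, ¬ x ⊂ m := by
  have hwf : WellFoundedLT (Set α) := inferInstance
  obtain ⟨m, hm, h⟩ := hwf.wf.has_min s hs
  exact ⟨m, hm, h⟩

lemma myMax {α : Type*} [Fintype α] {s : Set (Set α)} (hs : s.Nonempty) :
    ∃ m ∈ s, ∀ x ∈ s, ¬ m ⊂ x := by
  have hwf : WellFoundedGT (Set α) := inferInstance
  obtain ⟨m, hm, h⟩ := hwf.wf.has_min s hs
  exact ⟨m, hm, h⟩

lemma exists_core_subset {V : Type*} [Fintype V] {F : Set (Set V)} (_h0 : ∅ ∉ F)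
    {D : Set V} (hD : D ∈ F) : ∃ C, IsCore F C ∧ C ⊆ D := by
  obtain ⟨m, ⟨hmF, hmD⟩, hmin⟩ := myMin (s := {A | A ∈ F ∧ A ⊆ D}) ⟨D, hD, subset_rfl⟩
  refine ⟨m, ⟨hmF, fun A hA hAm => ?_⟩, hmD⟩
  by_contra hne
  exact hmin A ⟨hA, hAm.trans hmD⟩ ⟨hAm, fun h => hne (subset_antisymm hAm h)⟩

lemma core_crosses {V : Type*} {F : Set (Set V)} (hF : Pliable F) {C S : Set V}
    (hC : IsCore F C) (hS : S ∈ F) (h1 : (C ∩ S).Nonempty) (h2 : (C \ S).Nonempty) :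
    Crosses C S := by
  have hp : C ∩ S ∉ F := by
    intro h
    have := hC.2 _ h Set.inter_subset_left
    rw [Set.diff_nonempty] at h2
    exact h2 (by rw [← this]; exact Set.inter_subset_right)
  have hr : C \ S ∉ F := by
    intro h
    have := hC.2 _ h Set.diff_subset
    obtain ⟨x, hx1, hx2⟩ := h1
    rw [← this] at hx1
    exact hx1.2 hx2
  have h2' := hF.2.2 C hC.1 S hS
  have hq : C ∪ S ∈ F ∧ S \ C ∈ F := by
    rcases h2' with ⟨h, _⟩ | ⟨h, _⟩ | ⟨h, _⟩ | ⟨_, h⟩ | hh | ⟨h, _⟩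
    · exact absurd h hp
    · exact absurd h hp
    · exact absurd h hp
    · exact absurd h hr
    · exact hh
    · exact absurd h hr
  obtain ⟨hqU, hqS⟩ := hq
  refine ⟨h1, ?_, h2, ?_⟩
  · rw [Set.diff_nonempty]
    intro hsub
    exact hF.2.1 (by rwa [Set.univ_subset_iff.mp hsub] at hqU)
  · rcases Set.eq_empty_or_nonempty (S \ C) with h | h
    · rw [h] at hqS; exact absurd hqS hF.1
    · exact h

theorem stmt17 [Fintype V] (F : Set (Set V)) (hF : Pliable F) (hγ : PropertyGamma F)
    (I : Set (V × V))
    -- `I` is an inclusion-minimal cover of `F`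
    (hcov : CoversFam I F) (hmin : ∀ I' : Set (V × V), I' ⊂ I → ¬ CoversFam I' F)
    -- every edge of `I` covers some `F`-core
    (hecore : ∀ e ∈ I, ∃ C, IsCore F C ∧ Covers e C)
    -- `L` is a laminar witness family for `I`, augmented with `V`:
    (L : Set (Set V)) (hLlam : Laminar L) (hLV : Set.univ ∈ L)
    (hLF : L \ {Set.univ} ⊆ F)
    (Sw : V × V → Set V)
    (hSw : ∀ e ∈ I, Sw e ∈ L ∧ ∀ f ∈ I, (Covers f (Sw e) ↔ f = e))
    (hLeq : L = {Set.univ} ∪ Sw '' I) (hSwinj : Set.InjOn Sw I)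
    -- `S₁` is a white member of `L` whose unique child in `L` is `S₀`
    (S₀ S₁ : Set V) (hS₀ : S₀ ∈ L) (hS₁ : S₁ ∈ L) (hS₁V : S₁ ≠ Set.univ)
    (hchild : S₀ ⊂ S₁ ∧ ∀ S' ∈ L, S₀ ⊂ S' → S' ⊂ S₁ → False)
    (huniq : ∀ S' ∈ L, S' ⊂ S₁ → (∀ S'' ∈ L, S' ⊂ S'' → S'' ⊂ S₁ → False) → S' = S₀)
    (hwhite : ∀ C, IsCore F C → ¬ Owns L S₁ C)
    -- `C` is a core meeting `S₀` and its complement, not owned by `S₀` or a descendant of `S₀`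
    (C : Set V) (hC : IsCore F C)
    (hCS₀ : (C ∩ S₀).Nonempty) (hCS₀' : (C \ S₀).Nonempty)
    (hnotowned : ∀ S' ∈ L, S' ⊆ S₀ → ¬ Owns L S' C) :
    S₁ \ S₀ ⊆ C := by
  classical
  have hCne : C.Nonempty := by
    rcases Set.eq_empty_or_nonempty C with h | h
    · rw [h] at hC; exact absurd hC.1 hF.1
    · exact h
  have hS₀V : S₀ ≠ Set.univ := by
    intro h
    exact absurd (Set.univ_subset_iff.mp (h ▸ hchild.1.subset)) hS₁V
  have hS₀F : S₀ ∈ F := hLF ⟨hS₀, hS₀V⟩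
  have hS₁F : S₁ ∈ F := hLF ⟨hS₁, hS₁V⟩
  -- C does not contain S₁, via the owner of C
  have hCS₁' : (C \ S₁).Nonempty := by
    rw [Set.diff_nonempty]
    intro hsub
    obtain ⟨S, ⟨hSL, hCS⟩, hminS⟩ := myMin (s := {T | T ∈ L ∧ C ⊆ T}) ⟨S₁, hS₁, hsub⟩
    have hOwn : Owns L S C := ⟨hSL, hCS, fun S' hS' hCS' h => hminS S' ⟨hS', hCS'⟩ h⟩
    have hSS₁ : S ⊂ S₁ := by
      rcases hLlam S hSL S₁ hS₁ with hd | hss | hss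
      · obtain ⟨x, hx⟩ := hCne
        exact absurd (hd.ne_of_mem (hCS hx) (hsub hx)) (fun h => h rfl)
      · refine ⟨hss, fun h => ?_⟩
        have : S = S₁ := subset_antisymm hss h
        exact hwhite C hC (this ▸ hOwn)
      · have : S = S₁ := by
          by_contra hne
          exact hminS S₁ ⟨hS₁, hsub⟩ ⟨hss, fun h => hne (subset_antisymm h hss)⟩
        exact (hwhite C hC (this ▸ hOwn)).elim
    rcases hLlam S hSL S₀ hS₀ with hd | hss | hss
    · obtain ⟨x, hx1, hx2⟩ := hCS₀
      exact absurd (hd.ne_of_mem (hCS hx1) hx2) (fun h => h rfl)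
    · exact hnotowned S hSL hss hOwn
    · have hne : S ≠ S₀ := by
        intro h
        obtain ⟨x, hx1, hx2⟩ := hCS₀'
        exact hx2 (h ▸ hCS hx1)
      exact hchild.2 S hSL ⟨hss, fun h => hne (subset_antisymm h hss)⟩ hSS₁
  have hres : Residual F (∅ : Set (V × V)) = F := by
    ext A; simp [Residual]
  have hcr₀ : Crosses C S₀ := core_crosses hF hC hS₀F hCS₀ hCS₀'
  have hcr₁ : Crosses C S₁ := core_crosses hF hC hS₁F
    (hCS₀.mono (Set.inter_subset_inter_right _ hchild.1.subset)) hCS₁'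
  have h₀r : S₀ ∈ Residual F (∅ : Set (V × V)) := by rw [hres]; exact hS₀F
  have h₁r : S₁ ∈ Residual F (∅ : Set (V × V)) := by rw [hres]; exact hS₁F
  have hCr : IsCore (Residual F (∅ : Set (V × V))) C := by rw [hres]; exact hC
  have hγ' := hγ (∅ : Set (V × V)) S₀ S₁ C h₀r h₁r hchild.1 hCr hcr₀ hcr₁
  rcases hγ' with hD | hD
  · intro x hx
    by_contra hxC
    have : x ∈ S₁ \ (S₀ ∪ C) := ⟨hx.1, fun h => h.elim hx.2 hxC⟩
    rw [hD] at this
    exact this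
  · exfalso
    rw [hres] at hD
    obtain ⟨C', hC', hC'D⟩ := exists_core_subset hF.1 hD
    have hC'ne : C'.Nonempty := by
      rcases Set.eq_empty_or_nonempty C' with h | h
      · rw [h] at hC'; exact absurd hC'.1 hF.1
      · exact h
    have hC'S₁ : C' ⊆ S₁ := fun x hx => (hC'D hx).1
    have hC'S₀ : ∀ x ∈ C', x ∉ S₀ := fun x hx h => (hC'D hx).2 (Or.inl h)
    obtain ⟨S, ⟨hSL, hCS⟩, hminS⟩ := myMin (s := {T | T ∈ L ∧ C' ⊆ T}) ⟨S₁, hS₁, hC'S₁⟩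
    have hOwn : Owns L S C' := ⟨hSL, hCS, fun S' hS' hCS' h => hminS S' ⟨hS', hCS'⟩ h⟩
    have hSS₁ : S ⊂ S₁ := by
      rcases hLlam S hSL S₁ hS₁ with hd | hss | hss
      · obtain ⟨x, hx⟩ := hC'ne
        exact absurd (hd.ne_of_mem (hCS hx) (hC'S₁ hx)) (fun h => h rfl)
      · refine ⟨hss, fun h => ?_⟩
        have : S = S₁ := subset_antisymm hss h
        exact hwhite C' hC' (this ▸ hOwn)
      · have : S = S₁ := by
          by_contra hne
          exact hminS S₁ ⟨hS₁, hC'S₁⟩ ⟨hss, fun h => hne (subset_antisymm h hss)⟩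
        exact (hwhite C' hC' (this ▸ hOwn)).elim
    rcases hLlam S hSL S₀ hS₀ with hd | hss | hss
    · -- S disjoint from S₀: take a maximal T with S ⊆ T ⊂ S₁, it must be S₀
      obtain ⟨T, ⟨hTL, hST, hTS₁⟩, hmaxT⟩ :=
        myMax (s := {T | T ∈ L ∧ S ⊆ T ∧ T ⊂ S₁}) ⟨S, hSL, subset_rfl, hSS₁⟩
      have hTeq : T = S₀ := by
        refine huniq T hTL hTS₁ (fun S'' hS'' hTS'' hS''S₁ => ?_)
        exact hmaxT S'' ⟨hS'', hST.trans hTS''.subset, hS''S₁⟩ hTS''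
      obtain ⟨x, hx⟩ := hC'ne
      have hxS₀ : x ∈ S₀ := hTeq ▸ hST (hCS hx)
      exact hC'S₀ x hx hxS₀
    · obtain ⟨x, hx⟩ := hC'ne
      exact hC'S₀ x hx (hss (hCS hx))
    · have hne : S ≠ S₀ := by
        intro h
        obtain ⟨x, hx⟩ := hC'ne
        exact hC'S₀ x hx (h ▸ hCS hx)
      exact hchild.2 S hSL ⟨hss, fun h => hne (subset_antisymm h hss)⟩ hSS₁
end
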